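/- arXiv:1109.2848 — 2 statements merged into one kernel-verified Lean document; each statement's English description precedes it below -/
import Mathlib

section
/- Let N : ℕ, f : ℝ → ℂ, and ρ : Fin N → ℂ with ρ ≠ 0. Then the modulus square of the projected vector is ‖P_f(ρ)‖² = 2·‖ρ‖²·|f(ξ(ρ))|²·(1 − ξ(ρ))/(1 + √(1 − ξ(ρ))). (Toy-model form of Proposition 1, item (Proj-modulus).) -/
/-!
Expanding the square, `‖ρ − c ρ̄‖² = (1 + |c|²)‖ρ‖² − 2 Re(c̄ B(ρ,ρ))`, and `B(ρ,ρ) = ζ ‖ρ‖²` makes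
the cross term real once `c = ζ / r` with `r` real. Since `|B(ρ,ρ)| ≤ ‖ρ‖²` we have `ξ ≤ 1`, so
`ξ = 1 − s²` with `s = √(1 − ξ)`, and for `r = 1 + s` the factor `1 + ξ/r² − 2ξ/r` collapses to
`2s²/(1 + s)`.
-/

noncomputable section

open scoped BigOperators

namespace PureSpinorToy

variable {N : ℕ}

/-- Complex bilinear pairing `B(ρ,σ) = ∑ I, ρ_I σ_I`. -/
def B (ρ σ : Fin N → ℂ) : ℂ := ∑ I, ρ I * σ I

/-- Hermitian inner product `⟪ρ,σ⟫ = ∑ I, conj(ρ_I) σ_I`. -/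
def hInner (ρ σ : Fin N → ℂ) : ℂ := ∑ I, (starRingEnd ℂ) (ρ I) * σ I

/-- Norm square `‖ρ‖² = ⟪ρ,ρ⟫` (a nonnegative real). -/
def nsq (ρ : Fin N → ℂ) : ℝ := (hInner ρ ρ).re

/-- Componentwise complex conjugation `ρ̄`. -/
def conjFun (ρ : Fin N → ℂ) : Fin N → ℂ := fun I => (starRingEnd ℂ) (ρ I)

/-- `ζ(ρ) = B(ρ,ρ)/‖ρ‖²`. -/
def zeta (ρ : Fin N → ℂ) : ℂ := B ρ ρ / (nsq ρ : ℂ)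

/-- `ξ(ρ) = |ζ(ρ)|²`. -/
def xi (ρ : Fin N → ℂ) : ℝ := Complex.normSq (zeta ρ)

/-- The family of projection maps
`P_f(ρ) = f(ξ(ρ)) • (ρ − (ζ(ρ)/(1+√(1−ξ(ρ)))) • ρ̄)`. -/
def P (f : ℝ → ℂ) (ρ : Fin N → ℂ) : Fin N → ℂ :=
  f (xi ρ) • (ρ - (zeta ρ / (1 + (Real.sqrt (1 - xi ρ) : ℂ))) • conjFun ρ)

/-- The special function `h(t) = (1+√(1−t))/(2√(1−t))`. -/
def h (t : ℝ) : ℂ := (((1 + Real.sqrt (1 - t)) / (2 * Real.sqrt (1 - t)) : ℝ) : ℂ)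

/-- The potential `Φ(ρ) = (‖ρ‖²/2)(1+√(1−ξ(ρ)))`. -/
def Phi (ρ : Fin N → ℂ) : ℝ := (nsq ρ / 2) * (1 + Real.sqrt (1 - xi ρ))

lemma nsq_eq_sum_normSq (σ : Fin N → ℂ) : nsq σ = ∑ I, Complex.normSq (σ I) := by
  rw [nsq, hInner, Complex.re_sum]
  exact Finset.sum_congr rfl fun I _ => by simp [Complex.mul_re, Complex.normSq_apply]

lemma nsq_smul (a : ℂ) (σ : Fin N → ℂ) : nsq (a • σ) = Complex.normSq a * nsq σ := by
  simp only [nsq_eq_sum_normSq, Pi.smul_apply, smul_eq_mul, Complex.normSq_mul, Finset.mul_sum]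

lemma norm_B_self_le_nsq (ρ : Fin N → ℂ) : ‖B ρ ρ‖ ≤ nsq ρ :=
  calc ‖∑ I, ρ I * ρ I‖ ≤ ∑ I, ‖ρ I * ρ I‖ := norm_sum_le _ _
    _ = nsq ρ := by simp only [nsq_eq_sum_normSq, norm_mul, Complex.normSq_eq_norm_sq, sq]

lemma B_self_eq_zeta_mul_nsq (ρ : Fin N → ℂ) : B ρ ρ = zeta ρ * nsq ρ := by
  by_cases h : nsq ρ = 0
  -- `zeta ρ = B ρ ρ / 0 = 0` here, and `‖B ρ ρ‖ ≤ 0` makes the left side vanish too.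
  · simpa [h] using norm_B_self_le_nsq ρ
  · rw [zeta, div_mul_cancel₀ _ (Complex.ofReal_ne_zero.mpr h)]

lemma xi_le_one (ρ : Fin N → ℂ) : xi ρ ≤ 1 := by
  rw [xi, zeta, Complex.normSq_div, Complex.normSq_ofReal, Complex.normSq_eq_norm_sq]
  refine div_le_one_of_le₀ ?_ (mul_self_nonneg _)
  have := norm_B_self_le_nsq ρ
  nlinarith [norm_nonneg (B ρ ρ)]

lemma nsq_sub_smul_conjFun (c : ℂ) (ρ : Fin N → ℂ) :
    nsq (ρ - c • conjFun ρ) = (1 + Complex.normSq c) * nsq ρ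
      - 2 * ((starRingEnd ℂ) c * B ρ ρ).re := by
  have hterm : ∀ I, Complex.normSq (ρ I - c * (starRingEnd ℂ) (ρ I))
      = (1 + Complex.normSq c) * Complex.normSq (ρ I)
        - 2 * ((starRingEnd ℂ) c * (ρ I * ρ I)).re := by
    intro I
    rw [Complex.normSq_sub, Complex.normSq_mul, Complex.normSq_conj, map_mul,
      Complex.conj_conj]
    ring_nf
  simp only [nsq_eq_sum_normSq, Pi.sub_apply, Pi.smul_apply, smul_eq_mul, conjFun, hterm,
    Finset.sum_sub_distrib, ← Finset.mul_sum, B, ← Complex.re_sum]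

lemma nsq_sub_zeta_div_smul_conjFun (r : ℝ) (ρ : Fin N → ℂ) :
    nsq (ρ - (zeta ρ / r) • conjFun ρ) = (1 + xi ρ / r ^ 2 - 2 * xi ρ / r) * nsq ρ := by
  have hcross : ((starRingEnd ℂ) (zeta ρ / r) * B ρ ρ).re = xi ρ * nsq ρ / r := by
    rw [B_self_eq_zeta_mul_nsq, map_div₀, Complex.conj_ofReal,
      div_mul_eq_mul_div, ← mul_assoc, ← Complex.normSq_eq_conj_mul_self]
    norm_cast
  rw [nsq_sub_smul_conjFun, hcross, Complex.normSq_div, Complex.normSq_ofReal, xi]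
  ring

theorem statement5_general {N : ℕ} (f : ℝ → ℂ) (ρ : Fin N → ℂ) :
    nsq (P f ρ)
      = 2 * nsq ρ * Complex.normSq (f (xi ρ)) * ((1 - xi ρ) / (1 + Real.sqrt (1 - xi ρ))) := by
  set s := Real.sqrt (1 - xi ρ)
  have hs : s ^ 2 = 1 - xi ρ := Real.sq_sqrt (by linarith [xi_le_one ρ])
  have hs1 : 1 + s ≠ 0 := by positivity
  rw [P, nsq_smul, show (1 : ℂ) + (s : ℂ) = ((1 + s : ℝ) : ℂ) by push_cast; rfl,
    nsq_sub_zeta_div_smul_conjFun]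
  rw [show xi ρ = 1 - s ^ 2 by linarith]
  field_simp
  ring

/-- Toy model, Proposition 1 (Proj-modulus): the modulus square of the projected vector. -/
theorem statement5 {N : ℕ} (f : ℝ → ℂ) (ρ : Fin N → ℂ) (hρ : ρ ≠ 0) :
    nsq (P f ρ)
      = 2 * nsq ρ * Complex.normSq (f (xi ρ)) * ((1 - xi ρ) / (1 + Real.sqrt (1 - xi ρ))) :=
  statement5_general f ρ

end PureSpinorToy
end
end

section
/- Let N : ℕ and ρ : Fin N → ℂ with ρ ≠ 0 and ξ(ρ) < 1. Then the real-valued potential Φ is Fréchet differentiable over ℝ at ρ, with derivative the ℝ-linear map v ↦ 2·Re⟪P_h(ρ), v⟫. (Toy-model form of Proposition 3, item 2: the Hermitian projection P_h is the gradient of the scalar potential Φ, i.e. P_h = ∂Φ/∂ρ̄ in Wirtinger form.) -/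
noncomputable section

open scoped BigOperators

namespace PureSpinorToy

variable {N : ℕ}

/-! Writing `n = ‖σ‖²` and `b = B(σ,σ)`, one has `n √(1 - ξ) = √(n² - |b|²)`, so
`Φ = (n + √(n² - |b|²)) / 2` is built from the smooth functions `n` and `|b|²` by a square root
whose argument `n² (1 - ξ)` is positive at `ρ`. The chain rule gives
`dΦ(v) = Re⟪ρ,v⟫ + (n Re⟪ρ,v⟫ - Re(b̄ B(ρ,v))) / (n √(1 - ξ))`, and expanding
`Re⟪P_h(ρ), v⟫` with `h(ξ)` real yields half of the same expression. -/

open ContinuousLinearMap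

lemma nsq_eq_sum_norm_sq (σ : Fin N → ℂ) : nsq σ = ∑ I, ‖σ I‖ ^ 2 := by
  simp only [nsq, hInner, Complex.re_sum, Complex.conj_mul']
  norm_cast

lemma nsq_nonneg (σ : Fin N → ℂ) : 0 ≤ nsq σ := by
  rw [nsq_eq_sum_norm_sq]
  positivity

lemma nsq_pos {σ : Fin N → ℂ} (hσ : σ ≠ 0) : 0 < nsq σ := by
  obtain ⟨I, hI⟩ := Function.ne_iff.mp hσ
  rw [nsq_eq_sum_norm_sq]
  exact Finset.sum_pos' (fun J _ => by positivity)
    ⟨I, Finset.mem_univ I, pow_pos (norm_pos_iff.mpr hI) 2⟩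

lemma xi_eq (σ : Fin N → ℂ) : xi σ = ‖B σ σ‖ ^ 2 / nsq σ ^ 2 := by
  rw [xi, zeta, Complex.normSq_div, Complex.normSq_ofReal, Complex.normSq_eq_norm_sq, sq (nsq σ)]

/-- At `σ = 0` both sides vanish: `ξ 0 = 0` by `x / 0 = 0`, and `√` of a negative real is `0`. -/
lemma sqrt_nsq_sq_sub_norm_sq_B (σ : Fin N → ℂ) :
    √(nsq σ ^ 2 - ‖B σ σ‖ ^ 2) = nsq σ * √(1 - xi σ) := by
  rcases eq_or_ne (nsq σ) 0 with hσ | hσ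
  · rw [hσ, Real.sqrt_eq_zero_of_nonpos (by nlinarith [norm_nonneg (B σ σ)]), zero_mul]
  · have : nsq σ ^ 2 - ‖B σ σ‖ ^ 2 = nsq σ ^ 2 * (1 - xi σ) := by
      rw [xi_eq]
      field_simp
    rw [this, Real.sqrt_mul (sq_nonneg _), Real.sqrt_sq (nsq_nonneg σ)]

lemma Phi_eq (σ : Fin N → ℂ) : Phi σ = (nsq σ + √(nsq σ ^ 2 - ‖B σ σ‖ ^ 2)) / 2 := by
  rw [Phi, sqrt_nsq_sq_sub_norm_sq_B]
  ring

def hInnerCLM (ρ : Fin N → ℂ) : (Fin N → ℂ) →L[ℝ] ℂ :=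
  (∑ I, starRingEnd ℂ (ρ I) • proj I : (Fin N → ℂ) →L[ℂ] ℂ).restrictScalars ℝ

def BCLM (ρ : Fin N → ℂ) : (Fin N → ℂ) →L[ℝ] ℂ :=
  (∑ I, ρ I • proj I : (Fin N → ℂ) →L[ℂ] ℂ).restrictScalars ℝ

@[simp] lemma hInnerCLM_apply (ρ v : Fin N → ℂ) : hInnerCLM ρ v = hInner ρ v := by
  simp [hInnerCLM, hInner]

@[simp] lemma BCLM_apply (ρ v : Fin N → ℂ) : BCLM ρ v = B ρ v := by
  simp [BCLM, B]

lemma hasFDerivAt_nsq (ρ : Fin N → ℂ) :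
    HasFDerivAt nsq (2 • Complex.reCLM.comp (hInnerCLM ρ)) ρ := by
  rw [show nsq = fun σ : Fin N → ℂ => ∑ I, ‖σ I‖ ^ 2 from funext nsq_eq_sum_norm_sq]
  refine (HasFDerivAt.fun_sum fun I _ => (hasFDerivAt_apply I ρ).norm_sq).congr_fderiv ?_
  ext v
  simp [hInner, Complex.inner, Finset.mul_sum]
  exact Finset.sum_congr rfl fun I _ => by ring

lemma hasFDerivAt_B_self (ρ : Fin N → ℂ) :
    HasFDerivAt (fun σ => B σ σ) (2 • BCLM ρ) ρ := by
  refine (HasFDerivAt.fun_sum fun I _ =>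
    (hasFDerivAt_apply I ρ).mul (hasFDerivAt_apply I ρ)).congr_fderiv ?_
  ext v
  simp [B, Finset.mul_sum]
  exact Finset.sum_congr rfl fun I _ => by ring

lemma hasFDerivAt_Phi {ρ : Fin N → ℂ} (hρ : ρ ≠ 0) (hξ : xi ρ < 1) :
    ∃ L : (Fin N → ℂ) →L[ℝ] ℝ, HasFDerivAt Phi L ρ ∧ ∀ v, L v = (hInner ρ v).re +
      (nsq ρ * (hInner ρ v).re - (starRingEnd ℂ (B ρ ρ) * B ρ v).re) / (nsq ρ * √(1 - xi ρ)) := by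
  have hn := nsq_pos hρ
  have hc : 0 < √(1 - xi ρ) := Real.sqrt_pos.mpr (by linarith)
  have hD : 0 < nsq ρ ^ 2 - ‖B ρ ρ‖ ^ 2 :=
    Real.sqrt_pos.mp (by rw [sqrt_nsq_sq_sub_norm_sq_B]; positivity)
  have hsqrt := (((hasFDerivAt_nsq ρ).pow 2).sub (hasFDerivAt_B_self ρ).norm_sq).sqrt hD.ne'
  rw [show Phi = fun σ : Fin N → ℂ => (nsq σ + √(nsq σ ^ 2 - ‖B σ σ‖ ^ 2)) * (1 / 2) from
    funext fun σ => by rw [Phi_eq]; ring]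
  refine ⟨_, ((hasFDerivAt_nsq ρ).add hsqrt).mul_const (1 / 2 : ℝ), fun v => ?_⟩
  simp only [add_apply, smul_apply, sub_apply, comp_apply, hInnerCLM_apply, BCLM_apply,
    innerSL_apply_apply, Complex.reCLM_apply, smul_eq_mul, nsmul_eq_mul]
  rw [Pi.sub_apply, sqrt_nsq_sq_sub_norm_sq_B, Complex.inner,
    show ((2 : ℕ) : ℂ) * B ρ v * starRingEnd ℂ (B ρ ρ)
      = ((2 : ℝ) : ℂ) * (starRingEnd ℂ (B ρ ρ) * B ρ v) by push_cast; ring, Complex.re_ofReal_mul]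
  field_simp
  ring

lemma hInner_P (f : ℝ → ℂ) (ρ v : Fin N → ℂ) :
    hInner (P f ρ) v = starRingEnd ℂ (f (xi ρ)) *
      (hInner ρ v - starRingEnd ℂ (zeta ρ) / (1 + √(1 - xi ρ)) * B ρ v) := by
  simp only [hInner, P, B, conjFun, Pi.smul_apply, Pi.sub_apply, smul_eq_mul, Finset.mul_sum,
    ← Finset.sum_sub_distrib, map_mul, map_sub, map_div₀, map_add, map_one, Complex.conj_ofReal,
    Complex.conj_conj]
  exact Finset.sum_congr rfl fun I _ => by ring

lemma re_hInner_P_h (ρ v : Fin N → ℂ) :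
    (hInner (P h ρ) v).re = (1 + √(1 - xi ρ)) / (2 * √(1 - xi ρ)) * ((hInner ρ v).re -
      (starRingEnd ℂ (B ρ ρ) * B ρ v).re / (nsq ρ * (1 + √(1 - xi ρ)))) := by
  rw [hInner_P, h, zeta, Complex.conj_ofReal, map_div₀, Complex.conj_ofReal,
    show starRingEnd ℂ (B ρ ρ) / nsq ρ / (1 + √(1 - xi ρ)) * B ρ v
      = starRingEnd ℂ (B ρ ρ) * B ρ v / ((nsq ρ * (1 + √(1 - xi ρ)) : ℝ) : ℂ) by
      push_cast; rw [div_div, div_mul_eq_mul_div],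
    Complex.re_ofReal_mul, Complex.sub_re, Complex.div_ofReal_re]

/-- Toy model, Proposition 3 item 2: the potential `Φ` is (real) Fréchet differentiable
at `ρ`, with derivative `v ↦ 2·Re⟪P_h(ρ), v⟫`. -/
theorem statement10 {N : ℕ} (ρ : Fin N → ℂ) (hρ : ρ ≠ 0) (hξ : xi ρ < 1) :
    ∃ L : (Fin N → ℂ) →L[ℝ] ℝ, HasFDerivAt Phi L ρ ∧
      ∀ v, L v = 2 * (hInner (P h ρ) v).re := by
  obtain ⟨L, hL, hLv⟩ := hasFDerivAt_Phi hρ hξ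
  refine ⟨L, hL, fun v => ?_⟩
  have hn := nsq_pos hρ
  have hc : 0 < √(1 - xi ρ) := Real.sqrt_pos.mpr (by linarith)
  rw [hLv, re_hInner_P_h]
  field_simp
  ring

end PureSpinorToy
end
end
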